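/- arXiv:2303.16420 — 2 statements merged into one kernel-verified Lean document; each statement's English description precedes it below -/
import Mathlib

section
/- Let L > 0 and suppose the grid values satisfy |u_{i+1,j} − u_{i,j}| ≤ L(x_{i+1} − x_i) for all 1 ≤ i ≤ N₁−1, 1 ≤ j ≤ N₂, and |u_{i,j+1} − u_{i,j}| ≤ L(y_{j+1} − y_j) for all 1 ≤ i ≤ N₁, 1 ≤ j ≤ N₂−1. Then the Type-1 piecewise linear function u_N is Lipschitz with modulus L with respect to the ℓ¹-norm on T, i.e., |u_N(x,y) − u_N(x′,y′)| ≤ L(|x − x′| + |y − y′|) for all (x,y), (x′,y′) ∈ T. (This is the characterization, stated in Remark 3.1(i) of the paper, of the Lipschitz continuity of the Type-1 approximation by the finite constraints on adjacent grid-value differences.) -/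
open Finset Set
open scoped Classical

noncomputable section

/-- Lower-triangle linear piece of the Type-1 PLA over cell `(i,j)`. -/
def u1l (x y : ℕ → ℝ) (u : ℕ → ℕ → ℝ) (i j : ℕ) (p q : ℝ) : ℝ :=
  ((x (i + 1) - p) / (x (i + 1) - x i)) * u i j
    + ((p - x i) / (x (i + 1) - x i) - (q - y j) / (y (j + 1) - y j)) * u (i + 1) j
    + ((q - y j) / (y (j + 1) - y j)) * u (i + 1) (j + 1)

/-- Upper-triangle linear piece of the Type-1 PLA over cell `(i,j)`. -/
def u1u (x y : ℕ → ℝ) (u : ℕ → ℕ → ℝ) (i j : ℕ) (p q : ℝ) : ℝ :=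
  ((y (j + 1) - q) / (y (j + 1) - y j)) * u i j
    + ((q - y j) / (y (j + 1) - y j) - (p - x i) / (x (i + 1) - x i)) * u i (j + 1)
    + ((p - x i) / (x (i + 1) - x i)) * u (i + 1) (j + 1)

/-- Membership in the half-open interval `X_i` (closed at the left end for `i = 1`). -/
def memX (x : ℕ → ℝ) (i : ℕ) (p : ℝ) : Prop :=
  if i = 1 then x 1 ≤ p ∧ p ≤ x 2 else x i < p ∧ p ≤ x (i + 1)

/-- Membership in the cell `T_{i,j} = X_i × Y_j`. -/
def memCell (x y : ℕ → ℝ) (i j : ℕ) (p q : ℝ) : Prop :=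
  memX x i p ∧ memX y j q

/-- The Type-1 piecewise linear function built from the grid values `u i j`. -/
def uPL (N₁ N₂ : ℕ) (x y : ℕ → ℝ) (u : ℕ → ℕ → ℝ) (p q : ℝ) : ℝ :=
  ∑ i ∈ Finset.Icc 1 (N₁ - 1), ∑ j ∈ Finset.Icc 1 (N₂ - 1),
    if memCell x y i j p q then
      (if (q - y j) * (x (i + 1) - x i) ≤ (p - x i) * (y (j + 1) - y j)
        then u1l x y u i j p q else u1u x y u i j p q)
    else 0

/-!
On each cell the Type-1 interpolant is the larger or the smaller of its two affine pieces,
according to the sign of the second difference `u_{i+1,j} + u_{i,j+1} - u_{i,j} - u_{i+1,j+1}`;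
the partial slopes of both pieces are difference quotients of adjacent grid values, bounded
by `L`, so the interpolant is `L`-Lipschitz for the ℓ¹-norm on each closed cell. Neighbouring
cells agree on their common edge, so on a horizontal line the bounds on consecutive intervals
`[x_i, x_{i+1}]` glue to one on `[x_1, x_{N₁}]`. Transposing the grid maps the Type-1
triangulation to itself, which gives the vertical direction, and the triangle inequality
through `(x', y)` finishes.
-/

theorem abs_div_le_of_abs_le_mul {a Δ L : ℝ} (hΔ : 0 < Δ) (h : |a| ≤ L * Δ) : |a / Δ| ≤ L := by
  rwa [abs_div, abs_of_pos hΔ, div_le_iff₀ hΔ]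

theorem abs_mul_add_mul_le {s t d e L : ℝ} (hs : |s| ≤ L) (ht : |t| ≤ L) :
    |s * d + t * e| ≤ L * (|d| + |e|) :=
  calc |s * d + t * e| ≤ |s| * |d| + |t| * |e| := by
        rw [← abs_mul, ← abs_mul]; exact abs_add_le _ _
    _ ≤ L * |d| + L * |e| := by gcongr
    _ = L * (|d| + |e|) := (mul_add _ _ _).symm

section SelectionAlongLine

variable {A B a b c : ℝ}

theorem ite_le_eq_right_of_sub_eq_mul (h : A - B = (a - b) * c) (hab : a ≤ b) :
    (if b ≤ a then A else B) = B := by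
  split_ifs with hba
  · rw [le_antisymm hab hba, sub_self, zero_mul, sub_eq_zero] at h
    exact h
  · rfl

theorem ite_le_eq_max_of_sub_eq_mul (h : A - B = (a - b) * c) (hc : 0 ≤ c) :
    (if b ≤ a then A else B) = max A B := by
  split_ifs with hba
  · exact (max_eq_left (by nlinarith)).symm
  · exact (max_eq_right (by nlinarith)).symm

theorem ite_le_eq_min_of_sub_eq_mul (h : A - B = (a - b) * c) (hc : c ≤ 0) :
    (if b ≤ a then A else B) = min A B := by
  split_ifs with hba
  · exact (min_eq_left (by nlinarith)).symm
  · exact (min_eq_right (by nlinarith)).symm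

end SelectionAlongLine

theorem abs_sub_le_mul_of_Icc_union {g : ℝ → ℝ} {L a b c : ℝ}
    (h₁ : ∀ s ∈ Set.Icc a b, ∀ t ∈ Set.Icc a b, |g s - g t| ≤ L * |s - t|)
    (h₂ : ∀ s ∈ Set.Icc b c, ∀ t ∈ Set.Icc b c, |g s - g t| ≤ L * |s - t|) :
    ∀ s ∈ Set.Icc a c, ∀ t ∈ Set.Icc a c, |g s - g t| ≤ L * |s - t| := by
  intro s hs t ht
  wlog hst : s ≤ t generalizing s t
  · rw [abs_sub_comm, abs_sub_comm s]
    exact this t ht s hs (le_of_not_ge hst)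
  rcases le_total t b with htb | hbt
  · exact h₁ s ⟨hs.1, hst.trans htb⟩ t ⟨hs.1.trans hst, htb⟩
  rcases le_total b s with hbs | hsb
  · exact h₂ s ⟨hbs, hst.trans ht.2⟩ t ⟨hbs.trans hst, ht.2⟩
  calc |g s - g t| ≤ |g s - g b| + |g b - g t| := abs_sub_le _ _ _
    _ ≤ L * |s - b| + L * |b - t| :=
        add_le_add (h₁ s ⟨hs.1, hsb⟩ b ⟨hs.1.trans hsb, le_rfl⟩)
          (h₂ b ⟨le_rfl, hbt.trans ht.2⟩ t ⟨hbt, ht.2⟩)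
    _ = L * |s - t| := by
        rw [abs_of_nonpos (sub_nonpos.2 hsb), abs_of_nonpos (sub_nonpos.2 hbt),
          abs_of_nonpos (sub_nonpos.2 hst)]
        ring

theorem abs_sub_le_mul_of_grid {g : ℝ → ℝ} {x : ℕ → ℝ} {L : ℝ} {N : ℕ} (hN : 1 ≤ N)
    (h : ∀ i, 1 ≤ i → i < N → ∀ s ∈ Set.Icc (x i) (x (i + 1)), ∀ t ∈ Set.Icc (x i) (x (i + 1)),
      |g s - g t| ≤ L * |s - t|) :
    ∀ s ∈ Set.Icc (x 1) (x N), ∀ t ∈ Set.Icc (x 1) (x N), |g s - g t| ≤ L * |s - t| := by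
  induction N, hN using Nat.le_induction with
  | base =>
    intro s hs t ht
    rw [Set.Icc_self, Set.mem_singleton_iff] at hs ht
    simp [hs, ht]
  | succ N hN ih =>
    exact abs_sub_le_mul_of_Icc_union (ih fun i hi₁ hi₂ => h i hi₁ (by omega)) (h N hN (by omega))

def cellPL (x y : ℕ → ℝ) (u : ℕ → ℕ → ℝ) (i j : ℕ) (p q : ℝ) : ℝ :=
  if (q - y j) * (x (i + 1) - x i) ≤ (p - x i) * (y (j + 1) - y j)
    then u1l x y u i j p q else u1u x y u i j p q

section Cell

variable {x y : ℕ → ℝ} {u : ℕ → ℕ → ℝ} {i j : ℕ}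

theorem u1u_eq_u1l_transpose (p q : ℝ) :
    u1u x y u i j p q = u1l y x (fun j i => u i j) j i q p :=
  rfl

theorem u1l_sub_u1l (p q p' q' : ℝ) :
    u1l x y u i j p q - u1l x y u i j p' q'
      = (u (i + 1) j - u i j) / (x (i + 1) - x i) * (p - p')
        + (u (i + 1) (j + 1) - u (i + 1) j) / (y (j + 1) - y j) * (q - q') := by
  unfold u1l
  ring

theorem u1l_sub_u1u (hΔx : x (i + 1) - x i ≠ 0) (hΔy : y (j + 1) - y j ≠ 0) (p q : ℝ) :
    u1l x y u i j p q - u1u x y u i j p q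
      = ((p - x i) * (y (j + 1) - y j) - (q - y j) * (x (i + 1) - x i))
        * ((u (i + 1) j + u i (j + 1) - u i j - u (i + 1) (j + 1))
          / ((x (i + 1) - x i) * (y (j + 1) - y j))) := by
  unfold u1l u1u
  field_simp
  ring

variable {L : ℝ}

theorem abs_u1l_sub_u1l_le (hΔx : 0 < x (i + 1) - x i) (hΔy : 0 < y (j + 1) - y j)
    (hbot : |u (i + 1) j - u i j| ≤ L * (x (i + 1) - x i))
    (hright : |u (i + 1) (j + 1) - u (i + 1) j| ≤ L * (y (j + 1) - y j)) (p q p' q' : ℝ) :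
    |u1l x y u i j p q - u1l x y u i j p' q'| ≤ L * (|p - p'| + |q - q'|) := by
  rw [u1l_sub_u1l]
  exact abs_mul_add_mul_le (abs_div_le_of_abs_le_mul hΔx hbot)
    (abs_div_le_of_abs_le_mul hΔy hright)

theorem abs_u1u_sub_u1u_le (hΔx : 0 < x (i + 1) - x i) (hΔy : 0 < y (j + 1) - y j)
    (htop : |u (i + 1) (j + 1) - u i (j + 1)| ≤ L * (x (i + 1) - x i))
    (hleft : |u i (j + 1) - u i j| ≤ L * (y (j + 1) - y j)) (p q p' q' : ℝ) :
    |u1u x y u i j p q - u1u x y u i j p' q'| ≤ L * (|p - p'| + |q - q'|) := by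
  rw [u1u_eq_u1l_transpose, u1u_eq_u1l_transpose, add_comm |p - p'|]
  exact abs_u1l_sub_u1l_le hΔy hΔx hleft htop q p q' p'

theorem abs_cellPL_sub_cellPL_le (hΔx : 0 < x (i + 1) - x i) (hΔy : 0 < y (j + 1) - y j)
    (hbot : |u (i + 1) j - u i j| ≤ L * (x (i + 1) - x i))
    (htop : |u (i + 1) (j + 1) - u i (j + 1)| ≤ L * (x (i + 1) - x i))
    (hleft : |u i (j + 1) - u i j| ≤ L * (y (j + 1) - y j))
    (hright : |u (i + 1) (j + 1) - u (i + 1) j| ≤ L * (y (j + 1) - y j)) (p q p' q' : ℝ) :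
    |cellPL x y u i j p q - cellPL x y u i j p' q'| ≤ L * (|p - p'| + |q - q'|) := by
  have hl := abs_u1l_sub_u1l_le hΔx hΔy hbot hright p q p' q'
  have hu := abs_u1u_sub_u1u_le hΔx hΔy htop hleft p q p' q'
  have hsplit := u1l_sub_u1u (u := u) hΔx.ne' hΔy.ne'
  rcases le_total 0 ((u (i + 1) j + u i (j + 1) - u i j - u (i + 1) (j + 1))
      / ((x (i + 1) - x i) * (y (j + 1) - y j))) with hc | hc
  · simp only [cellPL, ite_le_eq_max_of_sub_eq_mul (hsplit _ _) hc]
    exact (abs_max_sub_max_le_max _ _ _ _).trans (max_le hl hu)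
  · simp only [cellPL, ite_le_eq_min_of_sub_eq_mul (hsplit _ _) hc]
    exact (abs_min_sub_min_le_max _ _ _ _).trans (max_le hl hu)

theorem cellPL_transpose (hΔx : x (i + 1) - x i ≠ 0) (hΔy : y (j + 1) - y j ≠ 0) (p q : ℝ) :
    cellPL y x (fun j i => u i j) j i q p = cellPL x y u i j p q := by
  change (if (p - x i) * (y (j + 1) - y j) ≤ (q - y j) * (x (i + 1) - x i)
    then u1u x y u i j p q else u1l x y u i j p q) = cellPL x y u i j p q
  unfold cellPL
  by_cases h : (q - y j) * (x (i + 1) - x i) ≤ (p - x i) * (y (j + 1) - y j)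
  · rw [if_pos h]
    exact ite_le_eq_right_of_sub_eq_mul
      (by rw [← neg_sub, u1l_sub_u1u hΔx hΔy, ← neg_mul, neg_sub]) h
  · rw [if_neg h, if_pos (le_of_not_ge h)]

theorem cellPL_succ_left_edge (hΔx : 0 < x (i + 1) - x i)
    (hΔx' : 0 < x (i + 1 + 1) - x (i + 1)) (hΔy : 0 < y (j + 1) - y j) {q : ℝ}
    (hq : q ∈ Set.Icc (y j) (y (j + 1))) :
    cellPL x y u (i + 1) j (x (i + 1)) q = cellPL x y u i j (x (i + 1)) q := by
  have hright : cellPL x y u i j (x (i + 1)) q = u1l x y u i j (x (i + 1)) q :=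
    if_pos (by nlinarith [hq.2])
  have hleft : cellPL x y u (i + 1) j (x (i + 1)) q = u1u x y u (i + 1) j (x (i + 1)) q :=
    ite_le_eq_right_of_sub_eq_mul (u1l_sub_u1u hΔx'.ne' hΔy.ne' _ _)
      (by nlinarith [hq.1])
  rw [hright, hleft]
  unfold u1l u1u
  field_simp
  ring

end Cell

section Grid

variable {x : ℕ → ℝ} {N i : ℕ} {p : ℝ}

theorem mem_Icc_of_memX (h : memX x i p) : p ∈ Set.Icc (x i) (x (i + 1)) := by
  unfold memX at h
  split_ifs at h with hi
  · subst hi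
    exact h
  · exact ⟨h.1.le, h.2⟩

theorem memX_right (hx : x i < x (i + 1)) : memX x i (x (i + 1)) := by
  unfold memX
  split_ifs with hi
  · subst hi
    exact ⟨hx.le, le_rfl⟩
  · exact ⟨hx, le_rfl⟩

theorem exists_memX (hN : 2 ≤ N) (hp : p ∈ Set.Icc (x 1) (x N)) :
    ∃ i ∈ Finset.Icc 1 (N - 1), memX x i p := by
  induction N, hN using Nat.le_induction with
  | base => exact ⟨1, by simp, by simpa [memX] using hp⟩
  | succ N hN ih =>
    by_cases hpN : p ≤ x N
    · obtain ⟨i, hi, hpi⟩ := ih ⟨hp.1, hpN⟩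
      exact ⟨i, by simp only [Finset.mem_Icc] at hi ⊢; omega, hpi⟩
    · refine ⟨N, by simp only [Finset.mem_Icc]; omega, ?_⟩
      rw [memX, if_neg (by omega)]
      exact ⟨lt_of_not_ge hpN, hp.2⟩

theorem monotoneOn_Icc_of_lt_succ (hx : ∀ i, 1 ≤ i → i < N → x i < x (i + 1)) :
    MonotoneOn x (Set.Icc 1 N) :=
  monotoneOn_of_le_add_one Set.ordConnected_Icc fun i _ hi hi' => (hx i hi.1 hi'.2).le

theorem eq_of_memX_of_memX (hx : MonotoneOn x (Set.Icc 1 N)) {i' : ℕ}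
    (hi : i ∈ Finset.Icc 1 (N - 1)) (hi' : i' ∈ Finset.Icc 1 (N - 1))
    (h : memX x i p) (h' : memX x i' p) : i = i' := by
  rw [Finset.mem_Icc] at hi hi'
  by_contra hne
  wlog hlt : i < i' generalizing i i'
  · exact this hi' hi h' h (Ne.symm hne) (by omega)
  have hmono : x (i + 1) ≤ x i' := hx ⟨by omega, by omega⟩ ⟨hi'.1, by omega⟩ hlt
  rw [memX, if_neg (by omega)] at h'
  linarith [(mem_Icc_of_memX h).2, h'.1]

end Grid

section Type1

variable {N₁ N₂ : ℕ} {x y : ℕ → ℝ} {u : ℕ → ℕ → ℝ} {i j : ℕ} {p q : ℝ}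

theorem uPL_eq_cellPL_of_memCell (hx : MonotoneOn x (Set.Icc 1 N₁))
    (hy : MonotoneOn y (Set.Icc 1 N₂)) (hi : i ∈ Finset.Icc 1 (N₁ - 1))
    (hj : j ∈ Finset.Icc 1 (N₂ - 1)) (hc : memCell x y i j p q) :
    uPL N₁ N₂ x y u p q = cellPL x y u i j p q := by
  unfold uPL
  rw [Finset.sum_eq_single_of_mem i hi, Finset.sum_eq_single_of_mem j hj, if_pos hc]
  · rfl
  · exact fun j' hj' hne => if_neg fun hc' => hne (eq_of_memX_of_memX hy hj' hj hc'.2 hc.2)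
  · exact fun i' hi' hne => Finset.sum_eq_zero fun j' _ =>
      if_neg fun hc' => hne (eq_of_memX_of_memX hx hi' hi hc'.1 hc.1)

-- A point on the left edge of a cell is assigned to the cell on its left (for `i ≠ 1`);
-- the two cell pieces agree there.
theorem uPL_eq_cellPL_of_mem_Icc (hx : ∀ i, 1 ≤ i → i < N₁ → x i < x (i + 1))
    (hy : ∀ j, 1 ≤ j → j < N₂ → y j < y (j + 1)) (hi : i ∈ Finset.Icc 1 (N₁ - 1))
    (hj : j ∈ Finset.Icc 1 (N₂ - 1)) (hp : p ∈ Set.Icc (x i) (x (i + 1))) (hq : memX y j q) :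
    uPL N₁ N₂ x y u p q = cellPL x y u i j p q := by
  have hxm := monotoneOn_Icc_of_lt_succ hx
  have hym := monotoneOn_Icc_of_lt_succ hy
  by_cases hpi : memX x i p
  · exact uPL_eq_cellPL_of_memCell hxm hym hi hj ⟨hpi, hq⟩
  rw [Finset.mem_Icc] at hi hj
  obtain ⟨i₀, rfl⟩ : ∃ i₀, i = i₀ + 1 := ⟨i - 1, by omega⟩
  have hi₀ : i₀ ≠ 0 := by
    rintro rfl
    exact hpi (by simpa [memX] using hp)
  have hp_eq : p = x (i₀ + 1) := by
    rw [memX, if_neg (by omega)] at hpi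
    exact le_antisymm (not_lt.1 fun hlt => hpi ⟨hlt, hp.2⟩) hp.1
  subst hp_eq
  have hΔx : 0 < x (i₀ + 1) - x i₀ := sub_pos.2 (hx i₀ (by omega) (by omega))
  rw [cellPL_succ_left_edge hΔx (sub_pos.2 (hx (i₀ + 1) (by omega) (by omega)))
      (sub_pos.2 (hy j hj.1 (by omega))) (mem_Icc_of_memX hq)]
  exact uPL_eq_cellPL_of_memCell hxm hym (Finset.mem_Icc.2 ⟨by omega, by omega⟩)
    (Finset.mem_Icc.2 hj) ⟨memX_right (sub_pos.1 hΔx), hq⟩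

theorem uPL_transpose (hx : ∀ i, 1 ≤ i → i < N₁ → x i < x (i + 1))
    (hy : ∀ j, 1 ≤ j → j < N₂ → y j < y (j + 1)) :
    uPL N₂ N₁ y x (fun j i => u i j) q p = uPL N₁ N₂ x y u p q := by
  unfold uPL
  rw [Finset.sum_comm]
  refine Finset.sum_congr rfl fun i hi => Finset.sum_congr rfl fun j hj => ?_
  rw [Finset.mem_Icc] at hi hj
  have hcell : memCell y x j i q p ↔ memCell x y i j p q := and_comm
  by_cases hc : memCell x y i j p q
  · rw [if_pos (hcell.2 hc), if_pos hc]
    exact cellPL_transpose (sub_pos.2 (hx i hi.1 (by omega))).ne'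
      (sub_pos.2 (hy j hj.1 (by omega))).ne' p q
  · rw [if_neg (mt hcell.1 hc), if_neg hc]

end Type1

theorem abs_uPL_sub_uPL_le_of_snd_eq {N₁ N₂ : ℕ} {x y : ℕ → ℝ} {u : ℕ → ℕ → ℝ} {L : ℝ}
    (hN₁ : 1 ≤ N₁) (hN₂ : 2 ≤ N₂)
    (hx : ∀ i, 1 ≤ i → i < N₁ → x i < x (i + 1))
    (hy : ∀ j, 1 ≤ j → j < N₂ → y j < y (j + 1))
    (hlip₁ : ∀ i j, 1 ≤ i → i < N₁ → 1 ≤ j → j ≤ N₂ →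
      |u (i + 1) j - u i j| ≤ L * (x (i + 1) - x i))
    (hlip₂ : ∀ i j, 1 ≤ i → i ≤ N₁ → 1 ≤ j → j < N₂ →
      |u i (j + 1) - u i j| ≤ L * (y (j + 1) - y j))
    {p p' q : ℝ} (hp : p ∈ Set.Icc (x 1) (x N₁)) (hp' : p' ∈ Set.Icc (x 1) (x N₁))
    (hq : q ∈ Set.Icc (y 1) (y N₂)) :
    |uPL N₁ N₂ x y u p q - uPL N₁ N₂ x y u p' q| ≤ L * |p - p'| := by
  obtain ⟨j, hj, hqj⟩ := exists_memX hN₂ hq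
  have hj' := Finset.mem_Icc.1 hj
  refine abs_sub_le_mul_of_grid (g := fun s => uPL N₁ N₂ x y u s q) hN₁
    (fun i hi₁ hi₂ s hs t ht => ?_) p hp p' hp'
  have hi : i ∈ Finset.Icc 1 (N₁ - 1) := Finset.mem_Icc.2 ⟨hi₁, by omega⟩
  simp only [uPL_eq_cellPL_of_mem_Icc hx hy hi hj hs hqj, uPL_eq_cellPL_of_mem_Icc hx hy hi hj ht hqj]
  simpa using abs_cellPL_sub_cellPL_le (sub_pos.2 (hx i hi₁ hi₂))
    (sub_pos.2 (hy j hj'.1 (by omega))) (hlip₁ i j hi₁ hi₂ hj'.1 (by omega))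
    (hlip₁ i (j + 1) hi₁ hi₂ (by omega) (by omega)) (hlip₂ i j hi₁ hi₂.le hj'.1 (by omega))
    (hlip₂ (i + 1) j (by omega) hi₂ hj'.1 (by omega)) s q t q

theorem type1_PLA_lipschitz_general
    (N₁ N₂ : ℕ) (hN₁ : 2 ≤ N₁) (hN₂ : 2 ≤ N₂)
    (x y : ℕ → ℝ)
    (hx : ∀ i, 1 ≤ i → i < N₁ → x i < x (i + 1))
    (hy : ∀ j, 1 ≤ j → j < N₂ → y j < y (j + 1))
    (L : ℝ)
    (u : ℕ → ℕ → ℝ)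
    (hlip₁ : ∀ i j, 1 ≤ i → i < N₁ → 1 ≤ j → j ≤ N₂ →
      |u (i + 1) j - u i j| ≤ L * (x (i + 1) - x i))
    (hlip₂ : ∀ i j, 1 ≤ i → i ≤ N₁ → 1 ≤ j → j < N₂ →
      |u i (j + 1) - u i j| ≤ L * (y (j + 1) - y j)) :
    ∀ p p' q q', p ∈ Set.Icc (x 1) (x N₁) → p' ∈ Set.Icc (x 1) (x N₁) →
      q ∈ Set.Icc (y 1) (y N₂) → q' ∈ Set.Icc (y 1) (y N₂) →
      |uPL N₁ N₂ x y u p q - uPL N₁ N₂ x y u p' q'| ≤ L * (|p - p'| + |q - q'|) := by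
  intro p p' q q' hp hp' hq hq'
  have horizontal : |uPL N₁ N₂ x y u p q - uPL N₁ N₂ x y u p' q| ≤ L * |p - p'| :=
    abs_uPL_sub_uPL_le_of_snd_eq (by omega) hN₂ hx hy hlip₁ hlip₂ hp hp' hq
  have vertical : |uPL N₁ N₂ x y u p' q - uPL N₁ N₂ x y u p' q'| ≤ L * |q - q'| := by
    rw [← uPL_transpose hx hy, ← uPL_transpose hx hy]
    exact abs_uPL_sub_uPL_le_of_snd_eq (by omega) hN₁ hy hx
      (fun j i hj₁ hj₂ hi₁ hi₂ => hlip₂ i j hi₁ hi₂ hj₁ hj₂)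
      (fun j i hj₁ hj₂ hi₁ hi₂ => hlip₁ i j hi₁ hi₂ hj₁ hj₂) hq hq' hp'
  calc |uPL N₁ N₂ x y u p q - uPL N₁ N₂ x y u p' q'|
      ≤ |uPL N₁ N₂ x y u p q - uPL N₁ N₂ x y u p' q|
        + |uPL N₁ N₂ x y u p' q - uPL N₁ N₂ x y u p' q'| := abs_sub_le _ _ _
    _ ≤ L * (|p - p'| + |q - q'|) := by rw [mul_add]; exact add_le_add horizontal vertical

/-- The discrete Lipschitz constraints on adjacent grid-value differences imply that the Type-1
piecewise linear function is Lipschitz with modulus `L` for the ℓ¹-norm on `T`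
(Remark 3.1(i) of the paper). -/
theorem type1_PLA_lipschitz
    (N₁ N₂ : ℕ) (hN₁ : 2 ≤ N₁) (hN₂ : 2 ≤ N₂)
    (x y : ℕ → ℝ)
    (hx : ∀ i, 1 ≤ i → i < N₁ → x i < x (i + 1))
    (hy : ∀ j, 1 ≤ j → j < N₂ → y j < y (j + 1))
    (L : ℝ) (hL : 0 < L)
    (u : ℕ → ℕ → ℝ)
    (hlip₁ : ∀ i j, 1 ≤ i → i < N₁ → 1 ≤ j → j ≤ N₂ →
      |u (i + 1) j - u i j| ≤ L * (x (i + 1) - x i))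
    (hlip₂ : ∀ i j, 1 ≤ i → i ≤ N₁ → 1 ≤ j → j < N₂ →
      |u i (j + 1) - u i j| ≤ L * (y (j + 1) - y j)) :
    ∀ p p' q q', p ∈ Set.Icc (x 1) (x N₁) → p' ∈ Set.Icc (x 1) (x N₁) →
      q ∈ Set.Icc (y 1) (y N₂) → q' ∈ Set.Icc (y 1) (y N₂) →
      |uPL N₁ N₂ x y u p q - uPL N₁ N₂ x y u p' q'| ≤ L * (|p - p'| + |q - q'|) :=
  type1_PLA_lipschitz_general N₁ N₂ hN₁ hN₂ x y hx hy L u hlip₁ hlip₂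
end
end

section
/- Suppose the grid values satisfy the discrete conservative conditions u_{i,j+1} + u_{i+1,j} ≥ u_{i,j} + u_{i+1,j+1} for all 1 ≤ i ≤ N₁−1, 1 ≤ j ≤ N₂−1. Then the Type-1 piecewise linear function u_N satisfies the conservative property on all of T: for all a ≤ b in [x₁,x_{N₁}] and c ≤ d in [y₁,y_{N₂}], u_N(a,d) + u_N(b,c) ≥ u_N(a,c) + u_N(b,d). -/
/-!
On a closed cell, in the local coordinates `s, t ∈ [0, 1]`, both triangle pieces are given by the
single formula `u₀₀ + s (u₁₀ - u₀₀) + t (u₀₁ - u₀₀) - min s t · E` with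
`E = u₀₁ + u₁₀ - u₀₀ - u₁₁ ≥ 0`, and neighbouring cells agree on their common edge, so `u_N` is this
formula on every closed cell. The rectangle difference `u(a,d) + u(b,c) - u(a,c) - u(b,d)` is
additive when a rectangle is cut along a grid line, so it suffices to check its sign on rectangles
inside one cell, where it equals `E · (min s t + min s' t' - min s t' - min s' t) ≥ 0`.
-/

open Finset Set
open scoped Classical

noncomputable section

section Partition

variable {α : Type*} [LinearOrder α]

theorem forall_Icc_of_forall_cells {P : α → α → Prop} {x : ℕ → α} {N : ℕ} (hN : 1 ≤ N)
    (hrefl : ∀ a, P a a) (htrans : ∀ a m b, a ≤ m → m ≤ b → P a m → P m b → P a b)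
    (hcell : ∀ k, 1 ≤ k → k < N → ∀ a b, x k ≤ a → a ≤ b → b ≤ x (k + 1) → P a b)
    {a b : α} (ha : x 1 ≤ a) (hab : a ≤ b) (hb : b ≤ x N) : P a b := by
  induction N, hN using Nat.le_induction generalizing b with
  | base => rw [le_antisymm hab (hb.trans ha)]; exact hrefl b
  | succ k hk ih =>
    have ih' : ∀ {b'}, a ≤ b' → b' ≤ x k → P a b' := ih fun i hi hik => hcell i hi (Nat.lt_succ_of_lt hik)
    rcases le_or_gt b (x k) with hbk | hkb
    · exact ih' hab hbk
    rcases le_or_gt (x k) a with hka | hak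
    · exact hcell k hk k.lt_succ_self a b hka hab hb
    · exact htrans a (x k) b hak.le hkb.le (ih' hak.le le_rfl)
        (hcell k hk k.lt_succ_self _ b le_rfl hkb.le hb)

end Partition

section RectDiff

variable {α β : Type*}

def rectDiff (f : α → β → ℝ) (a b : α) (c d : β) : ℝ := f a d + f b c - f a c - f b d

theorem rectDiff_add_left (f : α → β → ℝ) (a m b : α) (c d : β) :
    rectDiff f a m c d + rectDiff f m b c d = rectDiff f a b c d := by
  unfold rectDiff; ring

theorem rectDiff_add_right (f : α → β → ℝ) (a b : α) (c m d : β) :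
    rectDiff f a b c m + rectDiff f a b m d = rectDiff f a b c d := by
  unfold rectDiff; ring

variable [LinearOrder α] [LinearOrder β]

theorem rectDiff_nonneg_of_cells {f : α → β → ℝ} {x : ℕ → α} {y : ℕ → β} {N₁ N₂ : ℕ}
    (hN₁ : 1 ≤ N₁) (hN₂ : 1 ≤ N₂)
    (hcell : ∀ i j, 1 ≤ i → i < N₁ → 1 ≤ j → j < N₂ → ∀ a b c d,
      x i ≤ a → a ≤ b → b ≤ x (i + 1) → y j ≤ c → c ≤ d → d ≤ y (j + 1) →
      0 ≤ rectDiff f a b c d)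
    {a b : α} {c d : β} (ha : x 1 ≤ a) (hab : a ≤ b) (hb : b ≤ x N₁)
    (hc : y 1 ≤ c) (hcd : c ≤ d) (hd : d ≤ y N₂) : 0 ≤ rectDiff f a b c d := by
  refine forall_Icc_of_forall_cells (P := fun c d => ∀ a b, x 1 ≤ a → a ≤ b → b ≤ x N₁ →
    0 ≤ rectDiff f a b c d) hN₂ ?_ ?_ ?_ hc hcd hd a b ha hab hb
  · intro c a b _ _ _
    simp [rectDiff]
  · intro c m d _ _ hcm hmd a b ha hab hb
    rw [← rectDiff_add_right]
    exact add_nonneg (hcm a b ha hab hb) (hmd a b ha hab hb)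
  · intro j hj hjN c d hc hcd hd a b ha hab hb
    refine forall_Icc_of_forall_cells (P := fun a b => 0 ≤ rectDiff f a b c d) hN₁ ?_ ?_ ?_
      ha hab hb
    · intro a
      simp [rectDiff]
    · intro a m b _ _ ham hmb
      rw [← rectDiff_add_left]
      exact add_nonneg ham hmb
    · intro i hi hiN a b ha hab hb
      exact hcell i j hi hiN hj hjN a b c d ha hab hb hc hcd hd

end RectDiff

section Type1Interp

variable {u₀₀ u₁₀ u₀₁ u₁₁ s t : ℝ}

def type1Interp (u₀₀ u₁₀ u₀₁ u₁₁ s t : ℝ) : ℝ :=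
  u₀₀ + s * (u₁₀ - u₀₀) + t * (u₀₁ - u₀₀) - min s t * (u₀₁ + u₁₀ - u₀₀ - u₁₁)

theorem type1Interp_of_le (h : t ≤ s) :
    type1Interp u₀₀ u₁₀ u₀₁ u₁₁ s t = (1 - s) * u₀₀ + (s - t) * u₁₀ + t * u₁₁ := by
  rw [type1Interp, min_eq_right h]; ring

theorem type1Interp_of_ge (h : s ≤ t) :
    type1Interp u₀₀ u₁₀ u₀₁ u₁₁ s t = (1 - t) * u₀₀ + (t - s) * u₀₁ + s * u₁₁ := by
  rw [type1Interp, min_eq_left h]; ring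

theorem type1Interp_one_left (v₁₀ v₁₁ : ℝ) (ht₀ : 0 ≤ t) (ht₁ : t ≤ 1) :
    type1Interp u₀₀ u₁₀ u₀₁ u₁₁ 1 t = type1Interp u₁₀ v₁₀ u₁₁ v₁₁ 0 t := by
  rw [type1Interp_of_le ht₁, type1Interp_of_ge ht₀]; ring

theorem type1Interp_one_right (v₀₁ v₁₁ : ℝ) (hs₀ : 0 ≤ s) (hs₁ : s ≤ 1) :
    type1Interp u₀₀ u₁₀ u₀₁ u₁₁ s 1 = type1Interp u₀₁ u₁₁ v₀₁ v₁₁ s 0 := by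
  rw [type1Interp_of_ge hs₁, type1Interp_of_le hs₀]; ring

theorem min_add_min_le_min_add_min {s s' t t' : ℝ} (hs : s ≤ s') (ht : t ≤ t') :
    min s t' + min s' t ≤ min s t + min s' t' := by
  simp only [min_def]
  split_ifs <;> linarith

theorem rectDiff_type1Interp_nonneg (hu : u₀₀ + u₁₁ ≤ u₀₁ + u₁₀) {s s' t t' : ℝ}
    (hs : s ≤ s') (ht : t ≤ t') : 0 ≤ rectDiff (type1Interp u₀₀ u₁₀ u₀₁ u₁₁) s s' t t' := by
  have := mul_le_mul_of_nonneg_right (min_add_min_le_min_add_min hs ht) (sub_nonneg.2 hu)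
  unfold rectDiff type1Interp
  linear_combination this

end Type1Interp

section Grid

def localCoord (x : ℕ → ℝ) (i : ℕ) (p : ℝ) : ℝ := (p - x i) / (x (i + 1) - x i)

theorem localCoord_self (x : ℕ → ℝ) (i : ℕ) : localCoord x i (x i) = 0 := by
  simp [localCoord]

theorem localCoord_succ {x : ℕ → ℝ} {i : ℕ} (hx : x i < x (i + 1)) :
    localCoord x i (x (i + 1)) = 1 :=
  div_self (sub_pos.2 hx).ne'

theorem localCoord_le_localCoord {x : ℕ → ℝ} {i : ℕ} (hx : x i < x (i + 1)) {p p' : ℝ}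
    (h : p ≤ p') : localCoord x i p ≤ localCoord x i p' :=
  div_le_div_of_nonneg_right (by linarith) (sub_pos.2 hx).le

theorem localCoord_mem_Icc {x : ℕ → ℝ} {i : ℕ} (hx : x i < x (i + 1)) {p : ℝ}
    (hp : x i ≤ p) (hp' : p ≤ x (i + 1)) : 0 ≤ localCoord x i p ∧ localCoord x i p ≤ 1 := by
  constructor
  · simpa [localCoord_self] using localCoord_le_localCoord hx hp
  · simpa [localCoord_succ hx] using localCoord_le_localCoord hx hp'

theorem memX.le_le {x : ℕ → ℝ} {i : ℕ} {p : ℝ} (h : memX x i p) : x i ≤ p ∧ p ≤ x (i + 1) := by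
  unfold memX at h
  split_ifs at h with hi
  · subst hi; exact h
  · exact ⟨h.1.le, h.2⟩

variable {N : ℕ} {x : ℕ → ℝ}

theorem memX_or_eq_of_le_le (hx : ∀ i, 1 ≤ i → i < N → x i < x (i + 1)) {i : ℕ} (hi : 1 ≤ i)
    (hiN : i < N) {p : ℝ} (hp : x i ≤ p) (hp' : p ≤ x (i + 1)) :
    memX x i p ∨ ∃ k, i = k + 1 ∧ 1 ≤ k ∧ p = x (k + 1) ∧ memX x k p := by
  by_cases hleft : x i < p ∨ i = 1
  · left
    unfold memX
    split_ifs with h1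
    · subst h1; exact ⟨hp, hp'⟩
    · exact ⟨hleft.resolve_right h1, hp'⟩
  · obtain ⟨hpi, hi1⟩ := not_or.1 hleft
    obtain ⟨k, rfl⟩ : ∃ k, i = k + 1 := ⟨i - 1, by omega⟩
    have hpk : p = x (k + 1) := le_antisymm (not_lt.1 hpi) hp
    refine Or.inr ⟨k, rfl, by omega, hpk, ?_⟩
    have hk := hx k (by omega) (by omega)
    unfold memX
    split_ifs with h1
    · subst h1; exact ⟨by linarith, hpk.le⟩
    · exact ⟨by linarith, hpk.le⟩

theorem memX_injective (hx : ∀ i, 1 ≤ i → i < N → x i < x (i + 1)) {i i' : ℕ} {p : ℝ}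
    (hi : 1 ≤ i) (hiN : i < N) (hi' : 1 ≤ i') (hi'N : i' < N)
    (h : memX x i p) (h' : memX x i' p) : i = i' := by
  have hmono : MonotoneOn x (Set.Icc 1 N) :=
    (strictMonoOn_of_lt_add_one Set.ordConnected_Icc fun k _ hk hk' =>
      hx k hk.1 (by simp at hk'; omega)).monotoneOn
  have key : ∀ {k k'}, 1 ≤ k → k < k' → k' < N → memX x k p → memX x k' p → False := by
    intro k k' hk hkk' hk'N hm hm'
    have hle : x (k + 1) ≤ x k' := hmono ⟨by omega, by omega⟩ ⟨by omega, by omega⟩ hkk'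
    have hlt : x k' < p := by
      unfold memX at hm'
      rw [if_neg (by omega)] at hm'
      exact hm'.1
    linarith [hm.le_le.2]
  rcases lt_trichotomy i i' with hlt | heq | hgt
  · exact (key hi hlt hi'N h h').elim
  · exact heq
  · exact (key hi' hgt hiN h' h).elim

end Grid

section Type1Cell

variable {N₁ N₂ : ℕ} {x y : ℕ → ℝ} {u : ℕ → ℕ → ℝ} {i j : ℕ}

def type1Cell (x y : ℕ → ℝ) (u : ℕ → ℕ → ℝ) (i j : ℕ) (p q : ℝ) : ℝ :=
  type1Interp (u i j) (u (i + 1) j) (u i (j + 1)) (u (i + 1) (j + 1))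
    (localCoord x i p) (localCoord y j q)

theorem ite_u1l_u1u_eq_type1Cell (hx : x i < x (i + 1)) (hy : y j < y (j + 1)) (p q : ℝ) :
    (if (q - y j) * (x (i + 1) - x i) ≤ (p - x i) * (y (j + 1) - y j)
      then u1l x y u i j p q else u1u x y u i j p q) = type1Cell x y u i j p q := by
  have hdx := sub_pos.2 hx
  have hdy := sub_pos.2 hy
  have hcoord : ((q - y j) * (x (i + 1) - x i) ≤ (p - x i) * (y (j + 1) - y j)) ↔
      localCoord y j q ≤ localCoord x i p := by
    rw [localCoord, localCoord, div_le_div_iff₀ hdy hdx]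
  unfold type1Cell
  split_ifs with h
  · rw [type1Interp_of_le (hcoord.1 h), u1l, localCoord, localCoord]
    field_simp
    ring
  · rw [type1Interp_of_ge (le_of_lt (not_le.1 (mt hcoord.2 h))), u1u, localCoord, localCoord]
    field_simp
    ring

theorem type1Cell_succ_left (hx : x i < x (i + 1)) (hy : y j < y (j + 1)) {q : ℝ}
    (hq : y j ≤ q) (hq' : q ≤ y (j + 1)) :
    type1Cell x y u i j (x (i + 1)) q = type1Cell x y u (i + 1) j (x (i + 1)) q := by
  obtain ⟨ht₀, ht₁⟩ := localCoord_mem_Icc hy hq hq'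
  rw [type1Cell, type1Cell, localCoord_succ hx, localCoord_self, type1Interp_one_left _ _ ht₀ ht₁]

theorem type1Cell_succ_right (hx : x i < x (i + 1)) (hy : y j < y (j + 1)) {p : ℝ}
    (hp : x i ≤ p) (hp' : p ≤ x (i + 1)) :
    type1Cell x y u i j p (y (j + 1)) = type1Cell x y u i (j + 1) p (y (j + 1)) := by
  obtain ⟨hs₀, hs₁⟩ := localCoord_mem_Icc hx hp hp'
  rw [type1Cell, type1Cell, localCoord_succ hy, localCoord_self, type1Interp_one_right _ _ hs₀ hs₁]

theorem rectDiff_type1Cell_nonneg (hx : x i < x (i + 1)) (hy : y j < y (j + 1))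
    (hu : u i j + u (i + 1) (j + 1) ≤ u i (j + 1) + u (i + 1) j)
    {a b c d : ℝ} (hab : a ≤ b) (hcd : c ≤ d) : 0 ≤ rectDiff (type1Cell x y u i j) a b c d :=
  rectDiff_type1Interp_nonneg hu (localCoord_le_localCoord hx hab) (localCoord_le_localCoord hy hcd)

theorem uPL_eq_type1Cell_of_memCell (hx : ∀ i, 1 ≤ i → i < N₁ → x i < x (i + 1))
    (hy : ∀ j, 1 ≤ j → j < N₂ → y j < y (j + 1)) (hi : 1 ≤ i) (hiN : i < N₁) (hj : 1 ≤ j) (hjN : j < N₂)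
    {p q : ℝ} (hpq : memCell x y i j p q) : uPL N₁ N₂ x y u p q = type1Cell x y u i j p q := by
  rw [← ite_u1l_u1u_eq_type1Cell (hx i hi hiN) (hy j hj hjN), uPL,
    Finset.sum_eq_single_of_mem i (Finset.mem_Icc.2 ⟨hi, by omega⟩),
    Finset.sum_eq_single_of_mem j (Finset.mem_Icc.2 ⟨hj, by omega⟩), if_pos hpq]
  · intro j' hj' hne
    have := Finset.mem_Icc.1 hj'
    exact if_neg fun h => hne (memX_injective hy (by omega) (by omega) hj hjN h.2 hpq.2)
  · intro i' hi' hne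
    have := Finset.mem_Icc.1 hi'
    refine Finset.sum_eq_zero fun j' _ => if_neg fun h => hne ?_
    exact memX_injective hx (by omega) (by omega) hi hiN h.1 hpq.1

theorem uPL_eq_type1Cell (hx : ∀ i, 1 ≤ i → i < N₁ → x i < x (i + 1))
    (hy : ∀ j, 1 ≤ j → j < N₂ → y j < y (j + 1)) (hi : 1 ≤ i) (hiN : i < N₁) (hj : 1 ≤ j)
    (hjN : j < N₂) {p q : ℝ} (hp : x i ≤ p) (hp' : p ≤ x (i + 1)) (hq : y j ≤ q)
    (hq' : q ≤ y (j + 1)) : uPL N₁ N₂ x y u p q = type1Cell x y u i j p q := by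
  have hxi := hx i hi hiN
  have hyj := hy j hj hjN
  rcases memX_or_eq_of_le_le hx hi hiN hp hp' with hpi | ⟨k, rfl, hk, rfl, hpk⟩ <;>
  rcases memX_or_eq_of_le_le hy hj hjN hq hq' with hqj | ⟨l, rfl, hl, rfl, hql⟩
  · exact uPL_eq_type1Cell_of_memCell hx hy hi hiN hj hjN ⟨hpi, hqj⟩
  · rw [uPL_eq_type1Cell_of_memCell hx hy hi hiN hl (by omega) ⟨hpi, hql⟩,
      type1Cell_succ_right hxi (hy l hl (by omega)) hp hp']
  · rw [uPL_eq_type1Cell_of_memCell hx hy hk (by omega) hj hjN ⟨hpk, hqj⟩,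
      type1Cell_succ_left (hx k hk (by omega)) hyj hq hq']
  · rw [uPL_eq_type1Cell_of_memCell hx hy hk (by omega) hl (by omega) ⟨hpk, hql⟩,
      type1Cell_succ_left (hx k hk (by omega)) (hy l hl (by omega)) hql.le_le.1 le_rfl,
      type1Cell_succ_right hxi (hy l hl (by omega)) hp hp']

theorem rectDiff_uPL_nonneg_of_cell (hx : ∀ i, 1 ≤ i → i < N₁ → x i < x (i + 1))
    (hy : ∀ j, 1 ≤ j → j < N₂ → y j < y (j + 1))
    (hu : u i j + u (i + 1) (j + 1) ≤ u i (j + 1) + u (i + 1) j)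
    (hi : 1 ≤ i) (hiN : i < N₁) (hj : 1 ≤ j) (hjN : j < N₂) {a b c d : ℝ}
    (ha : x i ≤ a) (hab : a ≤ b) (hb : b ≤ x (i + 1))
    (hc : y j ≤ c) (hcd : c ≤ d) (hd : d ≤ y (j + 1)) : 0 ≤ rectDiff (uPL N₁ N₂ x y u) a b c d := by
  have heval {p q} (hp : x i ≤ p) (hp' : p ≤ x (i + 1)) (hq : y j ≤ q) (hq' : q ≤ y (j + 1)) :=
    uPL_eq_type1Cell (u := u) hx hy hi hiN hj hjN hp hp' hq hq'
  have hcell := rectDiff_type1Cell_nonneg (hx i hi hiN) (hy j hj hjN) hu hab hcd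
  rwa [rectDiff, ← heval ha (hab.trans hb) (hc.trans hcd) hd,
    ← heval ha (hab.trans hb) hc (hcd.trans hd), ← heval (ha.trans hab) hb hc (hcd.trans hd),
    ← heval (ha.trans hab) hb (hc.trans hcd) hd] at hcell

end Type1Cell

/-- The discrete conservative conditions on the grid values imply that the Type-1 piecewise
linear function satisfies the conservative property on all of `T`. -/
theorem type1_PLA_conservative
    (N₁ N₂ : ℕ) (hN₁ : 2 ≤ N₁) (hN₂ : 2 ≤ N₂)
    (x y : ℕ → ℝ)
    (hx : ∀ i, 1 ≤ i → i < N₁ → x i < x (i + 1))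
    (hy : ∀ j, 1 ≤ j → j < N₂ → y j < y (j + 1))
    (u : ℕ → ℕ → ℝ)
    (hcons : ∀ i j, 1 ≤ i → i < N₁ → 1 ≤ j → j < N₂ →
      u i j + u (i + 1) (j + 1) ≤ u i (j + 1) + u (i + 1) j) :
    ∀ a b c d : ℝ, x 1 ≤ a → a ≤ b → b ≤ x N₁ → y 1 ≤ c → c ≤ d → d ≤ y N₂ →
      uPL N₁ N₂ x y u a c + uPL N₁ N₂ x y u b d
        ≤ uPL N₁ N₂ x y u a d + uPL N₁ N₂ x y u b c := by
  intro a b c d ha hab hb hc hcd hd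
  have h := rectDiff_nonneg_of_cells (f := uPL N₁ N₂ x y u) (by omega) (by omega)
    (fun i j hi hiN hj hjN _ _ _ _ => rectDiff_uPL_nonneg_of_cell hx hy
      (hcons i j hi hiN hj hjN) hi hiN hj hjN) ha hab hb hc hcd hd
  rw [rectDiff] at h
  linarith

end
end
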